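/- ζ lies in I_G², the square of the augmentation ideal of (ℤ/p^sℤ)[G], if and only if Σ_{i=1}^{N−1} i²·log(i) = 0 in ℤ/p^sℤ. -/

import Mathlib

/-- The coefficient `β_i ∈ ℤ/p^sℤ`: the image of the rational number
`B₂(ĩ/N) = (ĩ/N)² − (ĩ/N) + 1/6`, where `ĩ ∈ {1, …, N−1}` is the integer
representative of `i ∈ (ℤ/Nℤ)ˣ`. -/
def bernoulliCoeff (p N s : ℕ) (i : (ZMod N)ˣ) : ZMod (p ^ s) :=
  (((i : ZMod N).val : ZMod (p ^ s)) ^ 2) * (((N : ZMod (p ^ s)) ^ 2)⁻¹)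
    - ((i : ZMod N).val : ZMod (p ^ s)) * ((N : ZMod (p ^ s))⁻¹)
    + (6 : ZMod (p ^ s))⁻¹

/-- The zeta element `ζ = Σ_{i ∈ G} β_i · [i]` in the group ring
`(ℤ/p^sℤ)[G]`, where `G = (ℤ/Nℤ)ˣ`. -/
noncomputable def zetaElement (p N s : ℕ) [Fact N.Prime] :
    MonoidAlgebra (ZMod (p ^ s)) (ZMod N)ˣ :=
  ∑ i : (ZMod N)ˣ, MonoidAlgebra.single i (bernoulliCoeff p N s i)

/-- The augmentation map `(ℤ/p^sℤ)[G] → ℤ/p^sℤ`, sending each group element to `1`. -/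
noncomputable def augmentationMap (p N s : ℕ) :
    MonoidAlgebra (ZMod (p ^ s)) (ZMod N)ˣ →ₐ[ZMod (p ^ s)] ZMod (p ^ s) :=
  MonoidAlgebra.lift (ZMod (p ^ s)) (ZMod (p ^ s)) (ZMod N)ˣ 1

/-- The augmentation ideal `I_G ⊆ (ℤ/p^sℤ)[G]`. -/
noncomputable def augmentationIdeal (p N s : ℕ) :
    Ideal (MonoidAlgebra (ZMod (p ^ s)) (ZMod N)ˣ) :=
  RingHom.ker (augmentationMap p N s)

section LogLemmas

variable {p N s : ℕ} (log : ZMod N → ZMod (p ^ s))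
  (hlog : ∀ a b : (ZMod N)ˣ, log ((a : ZMod N) * (b : ZMod N)) = log a + log b)

include hlog

lemma log_one : log ((1 : (ZMod N)ˣ) : ZMod N) = 0 := by
  have h := hlog 1 1
  simp only [Units.val_one, one_mul] at h ⊢
  have : log 1 + 0 = log 1 + log 1 := by simpa using h
  exact (add_left_cancel this).symm

lemma log_inv (g : (ZMod N)ˣ) : log ((g⁻¹ : (ZMod N)ˣ) : ZMod N) = - log (g : ZMod N) := by
  have h := hlog g g⁻¹
  rw [Units.mul_inv] at h
  have h1 : log (1 : ZMod N) = 0 := by simpa using log_one log hlog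
  rw [h1] at h
  linear_combination -h

lemma log_pow (g : (ZMod N)ˣ) (n : ℕ) :
    log ((g ^ n : (ZMod N)ˣ) : ZMod N) = n • log (g : ZMod N) := by
  induction n with
  | zero => simpa using log_one log hlog
  | succ n ih =>
      have h := hlog (g ^ n) g
      rw [← Units.val_mul, ← pow_succ] at h
      rw [h, ih, succ_nsmul]

lemma log_zpow (g : (ZMod N)ˣ) (k : ℤ) :
    log ((g ^ k : (ZMod N)ˣ) : ZMod N) = k • log (g : ZMod N) := by
  cases k with
  | ofNat n => simpa [zpow_natCast] using log_pow log hlog g n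
  | negSucc n =>
      rw [zpow_negSucc, log_inv log hlog, log_pow log hlog]
      simp [Int.negSucc_eq]
      ring

end LogLemmas

section Psi

variable (p N s : ℕ)

/-- exp hom into trivial square-zero extension -/
noncomputable def expHom (log : ZMod N → ZMod (p ^ s))
    (hlog : ∀ a b : (ZMod N)ˣ, log ((a : ZMod N) * (b : ZMod N)) = log a + log b) :
    (ZMod N)ˣ →* TrivSqZeroExt (ZMod (p ^ s)) (ZMod (p ^ s)) where
  toFun g := 1 + TrivSqZeroExt.inr (log (g : ZMod N))
  map_one' := by
    have h1 := log_one log hlog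
    simp only [Units.val_one] at h1
    simp [h1]
  map_mul' a b := by
    have h := hlog a b
    show 1 + TrivSqZeroExt.inr (log ((a * b : (ZMod N)ˣ) : ZMod N))
      = (1 + TrivSqZeroExt.inr (log (a : ZMod N))) * (1 + TrivSqZeroExt.inr (log (b : ZMod N)))
    rw [Units.val_mul, h]
    simp only [TrivSqZeroExt.inr_add]
    have : TrivSqZeroExt.inr (M := ZMod (p^s)) (R := ZMod (p^s)) (log (a : ZMod N)) *
        TrivSqZeroExt.inr (log (b : ZMod N)) = 0 := TrivSqZeroExt.inr_mul_inr _ _ _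
    simp only [mul_add, add_mul, this, one_mul, mul_one, add_zero]
    abel

noncomputable def psiHom (log : ZMod N → ZMod (p ^ s))
    (hlog : ∀ a b : (ZMod N)ˣ, log ((a : ZMod N) * (b : ZMod N)) = log a + log b) :
    MonoidAlgebra (ZMod (p ^ s)) (ZMod N)ˣ →ₐ[ZMod (p ^ s)]
      TrivSqZeroExt (ZMod (p ^ s)) (ZMod (p ^ s)) :=
  MonoidAlgebra.lift (ZMod (p ^ s)) _ (ZMod N)ˣ (expHom p N s log hlog)

variable (log : ZMod N → ZMod (p ^ s))
  (hlog : ∀ a b : (ZMod N)ˣ, log ((a : ZMod N) * (b : ZMod N)) = log a + log b)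

lemma psiHom_single (g : (ZMod N)ˣ) (c : ZMod (p ^ s)) :
    psiHom p N s log hlog (MonoidAlgebra.single g c)
      = c • (1 + TrivSqZeroExt.inr (log (g : ZMod N))) := by
  simp [psiHom, MonoidAlgebra.lift_single, expHom]

lemma fst_psiHom (x : MonoidAlgebra (ZMod (p ^ s)) (ZMod N)ˣ) :
    (psiHom p N s log hlog x).fst = augmentationMap p N s x := by
  have : (TrivSqZeroExt.fstHom (ZMod (p^s)) (ZMod (p^s)) (ZMod (p^s))).comp
      (psiHom p N s log hlog) = augmentationMap p N s := by
    apply MonoidAlgebra.algHom_ext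
    intro g
    simp [psiHom_single, augmentationMap, MonoidAlgebra.lift_single]
    exact Subsingleton.elim _ _
  exact DFunLike.congr_fun this x

lemma snd_psiHom_single (g : (ZMod N)ˣ) (c : ZMod (p ^ s)) :
    (psiHom p N s log hlog (MonoidAlgebra.single g c)).snd = c * log (g : ZMod N) := by
  simp [psiHom_single]

lemma psiHom_eq_zero_of_mem_sq (x : MonoidAlgebra (ZMod (p ^ s)) (ZMod N)ˣ)
    (hx : x ∈ (augmentationIdeal p N s) ^ 2) : psiHom p N s log hlog x = 0 := by
  rw [sq] at hx
  refine Submodule.mul_induction_on hx ?_ ?_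
  · intro m hm n hn
    rw [map_mul]
    have hm' : (psiHom p N s log hlog m).fst = 0 := by
      rw [fst_psiHom]; simpa [augmentationIdeal, RingHom.mem_ker] using hm
    have hn' : (psiHom p N s log hlog n).fst = 0 := by
      rw [fst_psiHom]; simpa [augmentationIdeal, RingHom.mem_ker] using hn
    ext
    · simp [TrivSqZeroExt.fst_mul, hm', hn']
    · simp [TrivSqZeroExt.snd_mul, hm', hn']
  · intro a b ha hb
    rw [map_add, ha, hb, add_zero]

end Psi

section Backward

variable (p N s : ℕ) [Fact p.Prime] [Fact N.Prime]

lemma aug_single (g : (ZMod N)ˣ) (c : ZMod (p ^ s)) :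
    augmentationMap p N s (MonoidAlgebra.single g c) = c := by
  simp [augmentationMap, MonoidAlgebra.lift_single]

lemma single_sub_one_mem (g : (ZMod N)ˣ) :
    MonoidAlgebra.single g (1 : ZMod (p ^ s)) - 1 ∈ augmentationIdeal p N s := by
  have : augmentationMap p N s (MonoidAlgebra.single g (1 : ZMod (p ^ s)) - 1) = 0 := by
    rw [map_sub, aug_single, map_one, sub_self]
  simpa [augmentationIdeal, RingHom.mem_ker] using this

set_option maxHeartbeats 1000000 in
lemma mem_sq_of_snd_eq_zero
    (log : ZMod N → ZMod (p ^ s))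
    (hlog : ∀ a b : (ZMod N)ˣ, log ((a : ZMod N) * (b : ZMod N)) = log a + log b)
    (hsurj : ∀ c : ZMod (p ^ s), ∃ u : (ZMod N)ˣ, log (u : ZMod N) = c)
    (x : MonoidAlgebra (ZMod (p ^ s)) (ZMod N)ˣ)
    (hx : augmentationMap p N s x = 0)
    (h2 : (psiHom p N s log hlog x).snd = 0) :
    x ∈ (augmentationIdeal p N s) ^ 2 := by
  haveI : NeZero (p ^ s) := ⟨pow_ne_zero s (Fact.out (p := p.Prime)).ne_zero⟩
  set I := augmentationIdeal p N s with hI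
  set q := Ideal.Quotient.mkₐ (ZMod (p ^ s)) (I ^ 2) with hqdef
  set f : (ZMod N)ˣ → _ := fun g => q (MonoidAlgebra.single g 1 - 1) with hfdef
  have hq0 : ∀ y ∈ I ^ 2, q y = 0 := fun y hy => by
    rw [hqdef, Ideal.Quotient.mkₐ_eq_mk]; exact Ideal.Quotient.eq_zero_iff_mem.mpr hy
  have hmul : ∀ g h : (ZMod N)ˣ, f (g * h) = f g + f h := by
    intro g h
    have hsng : MonoidAlgebra.single (g * h) (1 : ZMod (p ^ s))
        = MonoidAlgebra.single g 1 * MonoidAlgebra.single h 1 := by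
      rw [MonoidAlgebra.single_mul_single, one_mul]
    have hid : MonoidAlgebra.single (g * h) (1 : ZMod (p ^ s)) - 1
        = ((MonoidAlgebra.single g 1 - 1) + (MonoidAlgebra.single h 1 - 1))
          + (MonoidAlgebra.single g 1 - 1) * (MonoidAlgebra.single h 1 - 1) := by
      rw [hsng]; ring
    have hmem : (MonoidAlgebra.single g (1 : ZMod (p ^ s)) - 1)
        * (MonoidAlgebra.single h 1 - 1) ∈ I ^ 2 := by
      rw [sq]; exact Ideal.mul_mem_mul (single_sub_one_mem p N s g) (single_sub_one_mem p N s h)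
    show q _ = q _ + q _
    rw [hid, map_add, map_add, hq0 _ hmem, add_zero]
  have hone : f 1 = 0 := by
    show q _ = 0
    rw [← MonoidAlgebra.one_def, sub_self, map_zero]
  have hpow : ∀ (g : (ZMod N)ˣ) (n : ℕ), f (g ^ n) = n • f g := by
    intro g n
    induction n with
    | zero => simpa using hone
    | succ n ih =>
        calc f (g ^ (n + 1)) = f (g ^ n * g) := congrArg f (pow_succ g n)
        _ = f (g ^ n) + f g := hmul _ _
        _ = n • f g + f g := by rw [ih]
        _ = (n + 1) • f g := (succ_nsmul _ _).symm
  obtain ⟨g0, hg0⟩ := IsCyclic.exists_generator (α := (ZMod N)ˣ)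
  obtain ⟨u, hu⟩ := hsurj 1
  obtain ⟨j, hj⟩ := Subgroup.mem_zpowers_iff.mp (hg0 u)
  have hj1 : (j : ZMod (p ^ s)) * log (g0 : ZMod N) = 1 := by
    have hz := log_zpow log hlog g0 j
    rw [hj, hu, zsmul_eq_mul] at hz
    exact hz.symm
  have hker : ∀ h : (ZMod N)ˣ, log (h : ZMod N) = 0 → f h = 0 := by
    intro h hh
    obtain ⟨k, hk⟩ := Subgroup.mem_zpowers_iff.mp (hg0 h)
    have hlk := log_zpow log hlog g0 k
    rw [hk, hh, zsmul_eq_mul] at hlk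
    have hk0 : ((k : ℤ) : ZMod (p ^ s)) = 0 := by
      calc (k : ZMod (p ^ s)) = (k : ZMod (p ^ s)) * ((j : ZMod (p ^ s)) * log (g0 : ZMod N)) := by
            rw [hj1, mul_one]
      _ = (j : ZMod (p ^ s)) * ((k : ZMod (p ^ s)) * log (g0 : ZMod N)) := by ring
      _ = 0 := by rw [← hlk, mul_zero]
    obtain ⟨m, hm⟩ := (ZMod.intCast_zmod_eq_zero_iff_dvd k (p ^ s)).mp hk0
    have hpow' : (g0 ^ m) ^ (p ^ s) = h := by
      rw [← hk, hm, ← zpow_natCast (g0 ^ m) (p ^ s), ← zpow_mul, mul_comm]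
    rw [← hpow', hpow]
    have hns : ((p ^ s : ℕ) : ZMod (p ^ s)) • f (g0 ^ m) = (p ^ s) • f (g0 ^ m) :=
      Nat.cast_smul_eq_nsmul _ _ _
    rw [← hns, ZMod.natCast_self, zero_smul]
  have hfeq : ∀ g : (ZMod N)ˣ, f g = log (g : ZMod N) • f u := by
    intro g
    set t := (log (g : ZMod N)).val with ht
    have htc : ((t : ℕ) : ZMod (p ^ s)) = log (g : ZMod N) := ZMod.natCast_rightInverse _
    have hker0 : log ((g * (u ^ t)⁻¹ : (ZMod N)ˣ) : ZMod N) = 0 := by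
      have h1 := hlog g (u ^ t)⁻¹
      rw [← Units.val_mul] at h1
      rw [h1, log_inv log hlog, log_pow log hlog, hu, nsmul_eq_mul, mul_one, htc]
      ring
    have hsplit : g = (g * (u ^ t)⁻¹) * u ^ t := by group
    calc f g = f ((g * (u ^ t)⁻¹) * u ^ t) := by rw [← hsplit]
    _ = f (g * (u ^ t)⁻¹) + f (u ^ t) := hmul _ _
    _ = 0 + t • f u := by rw [hker _ hker0, hpow]
    _ = log (g : ZMod N) • f u := by rw [zero_add, ← htc, Nat.cast_smul_eq_nsmul]
  have key : ∀ y : MonoidAlgebra (ZMod (p ^ s)) (ZMod N)ˣ,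
      q y = augmentationMap p N s y • q 1 + (psiHom p N s log hlog y).snd • f u := by
    intro y
    induction y using MonoidAlgebra.induction_on with
    | of g =>
        have h1 : (MonoidAlgebra.of (ZMod (p ^ s)) (ZMod N)ˣ) g
            = (MonoidAlgebra.single g 1 - 1) + 1 := by
          simp [MonoidAlgebra.of_apply]
        have h3 : q (MonoidAlgebra.single g (1 : ZMod (p ^ s)) - 1) = f g := rfl
        have h4 : augmentationMap p N s (MonoidAlgebra.single g (1 : ZMod (p ^ s)) - 1) = 0 := by
          rw [map_sub, aug_single, map_one, sub_self]
        have h5 : (psiHom p N s log hlog (MonoidAlgebra.single g (1 : ZMod (p ^ s)) - 1)).snd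
            = log (g : ZMod N) := by
          rw [map_sub, TrivSqZeroExt.snd_sub, snd_psiHom_single, map_one,
            TrivSqZeroExt.snd_one, one_mul, sub_zero]
        rw [h1, map_add, map_add, map_add, map_one, map_one, map_one,
          TrivSqZeroExt.snd_add, TrivSqZeroExt.snd_one, h4, h5, add_zero, zero_add, one_smul,
          h3, hfeq g, add_comm]
    | add a b ha hb =>
        rw [map_add, map_add, map_add, ha, hb, TrivSqZeroExt.snd_add, add_smul, add_smul]
        abel
    | smul r a ha =>
        rw [map_smul, map_smul, map_smul, ha]
        simp only [smul_add, smul_smul, TrivSqZeroExt.snd_smul, smul_eq_mul]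
  have hfin := key x
  rw [hx, h2, zero_smul, zero_smul, add_zero] at hfin
  rw [hqdef, Ideal.Quotient.mkₐ_eq_mk] at hfin
  exact Ideal.Quotient.eq_zero_iff_mem.mp hfin

end Backward

section Sums

variable (p N s : ℕ) [Fact p.Prime] [Fact N.Prime]

lemma isUnit_aux (c : ℕ) (hc : ¬ p ∣ c) : IsUnit ((c : ℕ) : ZMod (p ^ s)) := by
  rw [ZMod.isUnit_iff_coprime]
  exact Nat.Coprime.pow_right s (((Fact.out (p := p.Prime)).coprime_iff_not_dvd.mpr hc).symm)

lemma eq_zero_of_two_mul (hp : 3 < p) (x : ZMod (p ^ s)) (hx : x + x = 0) : x = 0 := by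
  have h2 : IsUnit ((2 : ℕ) : ZMod (p ^ s)) := isUnit_aux p s 2 (by
    intro h
    have h6 := Nat.le_of_dvd (by norm_num) h
    omega)
  have hmm : ((2 : ℕ) : ZMod (p ^ s)) * x = ((2 : ℕ) : ZMod (p ^ s)) * 0 := by
    push_cast
    rw [two_mul, hx, mul_zero]
  exact h2.mul_left_cancel hmm

lemma eq_zero_of_six_mul (hp : 3 < p) (x : ZMod (p ^ s)) (hx : ((6:ℕ) : ZMod (p ^ s)) * x = 0) :
    x = 0 := by
  have h6 : IsUnit ((6 : ℕ) : ZMod (p ^ s)) := isUnit_aux p s 6 (by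
    intro h
    have hle := Nat.le_of_dvd (by norm_num) h
    have hprime : p.Prime := Fact.out
    interval_cases p <;> revert h hprime <;> decide)
  have hmm : ((6 : ℕ) : ZMod (p ^ s)) * x = ((6 : ℕ) : ZMod (p ^ s)) * 0 := by
    rw [hx, mul_zero]
  exact h6.mul_left_cancel hmm

lemma Nsub1_cast (hdvd : p ^ s ∣ N - 1) : ((N - 1 : ℕ) : ZMod (p ^ s)) = 0 :=
  (ZMod.natCast_eq_zero_iff _ _).mpr hdvd

lemma N_cast_one (hdvd : p ^ s ∣ N - 1) : ((N : ℕ) : ZMod (p ^ s)) = 1 := by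
  have hN : 1 ≤ N := (Fact.out (p := N.Prime)).one_lt.le
  have hsplit : N = (N - 1) + 1 := by omega
  rw [hsplit, Nat.cast_add, Nat.cast_one, Nsub1_cast p N s hdvd, zero_add]

lemma sum_val_transfer {M : Type*} [AddCommMonoid M] (F : ℕ → M) :
    ∑ i : (ZMod N)ˣ, F ((i : ZMod N).val) = ∑ k ∈ Finset.Icc 1 (N - 1), F k := by
  haveI : NeZero N := ⟨(Fact.out (p := N.Prime)).ne_zero⟩
  refine Finset.sum_nbij' (fun g => ((g : ZMod N)).val)
    (fun k => if h : IsUnit ((k : ℕ) : ZMod N) then h.unit else 1) ?_ ?_ ?_ ?_ ?_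
  · intro g _
    have h1 : (g : ZMod N).val ≠ 0 := by
      rw [Ne, ZMod.val_eq_zero]
      exact Units.ne_zero g
    have h2 : (g : ZMod N).val < N := ZMod.val_lt _
    exact Finset.mem_Icc.mpr ⟨Nat.one_le_iff_ne_zero.mpr h1, Nat.le_sub_one_of_lt h2⟩
  · intro k _
    exact Finset.mem_univ _
  · intro g _
    have hcast : (((g : ZMod N).val : ℕ) : ZMod N) = (g : ZMod N) := ZMod.natCast_rightInverse _
    have hiu : IsUnit ((((g : ZMod N).val : ℕ)) : ZMod N) := by
      rw [hcast]; exact g.isUnit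
    apply Units.ext
    show (((if h : IsUnit ((((g : ZMod N).val : ℕ)) : ZMod N) then h.unit else 1 : (ZMod N)ˣ)) : ZMod N) = (g : ZMod N)
    rw [dif_pos hiu, IsUnit.unit_spec, hcast]
  · intro k hk
    rw [Finset.mem_Icc] at hk
    have hklt : k < N := by
      have hN : 1 ≤ N := (Fact.out (p := N.Prime)).one_lt.le
      omega
    have hval : ((k : ℕ) : ZMod N).val = k := ZMod.val_cast_of_lt hklt
    have hne : ((k : ℕ) : ZMod N) ≠ 0 := by
      intro h0
      rw [h0, ZMod.val_zero] at hval
      omega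
    have hiu : IsUnit ((k : ℕ) : ZMod N) := isUnit_iff_ne_zero.mpr hne
    show ((((if h : IsUnit ((k : ℕ) : ZMod N) then h.unit else 1 : (ZMod N)ˣ)) : ZMod N)).val = k
    rw [dif_pos hiu, IsUnit.unit_spec, hval]
  · intro g _
    rfl

lemma six_mul_sum_sq (m : ℕ) :
    6 * ∑ k ∈ Finset.range (m + 1), k ^ 2 = m * (m + 1) * (2 * m + 1) := by
  induction m with
  | zero => simp
  | succ m ih =>
      rw [Finset.sum_range_succ, Nat.mul_add, ih]
      ring

lemma sum_Icc_eq_range {M : Type*} [AddCommMonoid M] (F : ℕ → M) (hF : F 0 = 0) (hN : 1 ≤ N) :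
    ∑ k ∈ Finset.Icc 1 (N - 1), F k = ∑ k ∈ Finset.range N, F k := by
  have hIco : Finset.Ico 1 N = Finset.Icc 1 (N - 1) := by
    rw [← Finset.Ico_add_one_right_eq_Icc]
    congr 1
    omega
  have h01 : ∑ k ∈ Finset.Ico 0 1, F k = 0 := by
    rw [← Finset.range_eq_Ico, Finset.sum_range_one, hF]
  rw [Finset.range_eq_Ico, ← Finset.sum_Ico_consecutive F (by omega : (0:ℕ) ≤ 1) (by omega : 1 ≤ N),
    h01, zero_add, hIco]

lemma sum_range_cast_zero (hp : 3 < p) (hdvd : p ^ s ∣ N - 1) :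
    ∑ k ∈ Finset.range N, ((k : ℕ) : ZMod (p ^ s)) = 0 := by
  apply eq_zero_of_two_mul p s hp
  have h := Finset.sum_range_id_mul_two N
  have hcast : (((∑ i ∈ Finset.range N, i) * 2 : ℕ) : ZMod (p ^ s))
      = ((N * (N - 1) : ℕ) : ZMod (p ^ s)) := by rw [h]
  rw [Nat.cast_mul, Nat.cast_mul, Nat.cast_sum, Nsub1_cast p N s hdvd, mul_zero] at hcast
  calc (∑ k ∈ Finset.range N, ((k:ℕ) : ZMod (p^s))) + (∑ k ∈ Finset.range N, ((k:ℕ) : ZMod (p^s)))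
      = (∑ i ∈ Finset.range N, ((i:ℕ) : ZMod (p^s))) * ((2:ℕ) : ZMod (p^s)) := by push_cast; ring
  _ = 0 := hcast
  _ = 0 := rfl

lemma sum_range_sq_cast_zero (hp : 3 < p) (hdvd : p ^ s ∣ N - 1) :
    ∑ k ∈ Finset.range N, ((k : ℕ) : ZMod (p ^ s)) ^ 2 = 0 := by
  have hN : 1 ≤ N := (Fact.out (p := N.Prime)).one_lt.le
  apply eq_zero_of_six_mul p s hp
  have h := six_mul_sum_sq (N - 1)
  rw [show N - 1 + 1 = N from by omega] at h
  have hcast : ((6 * ∑ k ∈ Finset.range N, k ^ 2 : ℕ) : ZMod (p ^ s))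
      = (((N - 1) * N * (2 * (N - 1) + 1) : ℕ) : ZMod (p ^ s)) := by rw [h]
  rw [Nat.cast_mul, Nat.cast_mul, Nat.cast_mul, Nat.cast_sum, Nsub1_cast p N s hdvd,
    zero_mul, zero_mul] at hcast
  rw [← hcast]
  push_cast
  ring

end Sums

section LogSums

variable (p N s : ℕ) [Fact p.Prime] [Fact N.Prime]
  (log : ZMod N → ZMod (p ^ s))
  (hlog : ∀ a b : (ZMod N)ˣ, log ((a : ZMod N) * (b : ZMod N)) = log a + log b)

include hlog

lemma sum_log_zero (hp : 3 < p) : ∑ i : (ZMod N)ˣ, log (i : ZMod N) = 0 := by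
  have h1 : ∑ i : (ZMod N)ˣ, log ((i⁻¹ : (ZMod N)ˣ) : ZMod N) = ∑ i : (ZMod N)ˣ, log (i : ZMod N) :=
    Fintype.sum_equiv (Equiv.inv _) _ _ (fun i => by
      show log ((i⁻¹ : (ZMod N)ˣ) : ZMod N) = log ((i⁻¹ : (ZMod N)ˣ) : ZMod N)
      rfl)
  have h2 : ∑ i : (ZMod N)ˣ, log ((i⁻¹ : (ZMod N)ˣ) : ZMod N)
      = - ∑ i : (ZMod N)ˣ, log (i : ZMod N) := by
    rw [← Finset.sum_neg_distrib]
    exact Finset.sum_congr rfl (fun i _ => log_inv log hlog i)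
  apply eq_zero_of_two_mul p s hp
  nth_rewrite 2 [← h1]
  rw [h2]
  simp

lemma log_neg_one_zero (hp : 3 < p) : log ((-1 : (ZMod N)ˣ) : ZMod N) = 0 := by
  have h := hlog (-1) (-1)
  have hm : ((-1 : (ZMod N)ˣ) : ZMod N) * ((-1 : (ZMod N)ˣ) : ZMod N) = (1 : ZMod N) := by
    rw [Units.val_neg, Units.val_one, neg_mul_neg, one_mul]
  rw [hm] at h
  have h1 : log (1 : ZMod N) = 0 := by
    have := log_one log hlog
    rwa [Units.val_one] at this
  rw [h1] at h
  exact eq_zero_of_two_mul p s hp _ (by linear_combination -h)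

lemma sum_val_log_zero (hp : 3 < p) (hdvd : p ^ s ∣ N - 1) :
    ∑ i : (ZMod N)ˣ, (((i : ZMod N).val : ZMod (p ^ s))) * log (i : ZMod N) = 0 := by
  haveI : NeZero N := ⟨(Fact.out (p := N.Prime)).ne_zero⟩
  set T := ∑ i : (ZMod N)ˣ, (((i : ZMod N).val : ZMod (p ^ s))) * log (i : ZMod N) with hT
  have h1 : ∑ i : (ZMod N)ˣ, ((((-i : (ZMod N)ˣ) : ZMod N).val : ZMod (p ^ s)))
        * log ((-i : (ZMod N)ˣ) : ZMod N) = T :=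
    Fintype.sum_equiv (Equiv.neg _) _ _ (fun i => rfl)
  have h2 : ∀ i : (ZMod N)ˣ, ((((-i : (ZMod N)ˣ) : ZMod N).val : ZMod (p ^ s)))
        * log ((-i : (ZMod N)ˣ) : ZMod N)
      = (1 - ((i : ZMod N).val : ZMod (p ^ s))) * log (i : ZMod N) := by
    intro i
    have hlogneg : log ((-i : (ZMod N)ˣ) : ZMod N) = log (i : ZMod N) := by
      have h := hlog (-1) i
      have hm : ((-1 : (ZMod N)ˣ) : ZMod N) * (i : ZMod N) = ((-i : (ZMod N)ˣ) : ZMod N) := by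
        rw [Units.val_neg, Units.val_neg, Units.val_one, neg_one_mul]
      rw [hm, log_neg_one_zero p N s log hlog hp, zero_add] at h
      exact h
    have hval : ((-i : (ZMod N)ˣ) : ZMod N).val = N - (i : ZMod N).val := by
      rw [Units.val_neg, ZMod.neg_val, if_neg (Units.ne_zero i)]
    have hcast : ((N - (i : ZMod N).val : ℕ) : ZMod (p ^ s))
        = 1 - ((i : ZMod N).val : ZMod (p ^ s)) := by
      rw [Nat.cast_sub (le_of_lt (ZMod.val_lt _)), N_cast_one p N s hdvd]
    rw [hlogneg, hval, hcast]
  rw [Finset.sum_congr rfl (fun i _ => h2 i)] at h1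
  have h3 : ∑ i : (ZMod N)ˣ, (1 - ((i : ZMod N).val : ZMod (p ^ s))) * log (i : ZMod N)
      = ∑ i : (ZMod N)ˣ, log (i : ZMod N) - T := by
    rw [hT, ← Finset.sum_sub_distrib]
    exact Finset.sum_congr rfl (fun i _ => by ring)
  rw [h3, sum_log_zero p N s log hlog hp, zero_sub] at h1
  exact eq_zero_of_two_mul p s hp _ (by linear_combination -h1)

end LogSums

/-- `ζ` lies in `I_G²` iff `Σ_{i=1}^{N−1} i²·log(i) = 0` in `ℤ/p^sℤ`, where
`log` is a surjective group homomorphism `(ℤ/Nℤ)ˣ → ℤ/p^sℤ` (formalized as a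
function on `ℤ/Nℤ` that is a homomorphism on units and surjective onto `ℤ/p^sℤ`). -/
theorem zeta_in_aug_sq_iff_sum_sq_log
    (p N s : ℕ) [Fact p.Prime] [Fact N.Prime]
    (hp : 3 < p) (hs : 1 ≤ s) (hdvd : p ^ s ∣ N - 1)
    (log : ZMod N → ZMod (p ^ s))
    (hlog : ∀ a b : (ZMod N)ˣ, log ((a : ZMod N) * (b : ZMod N)) = log a + log b)
    (hsurj : ∀ c : ZMod (p ^ s), ∃ u : (ZMod N)ˣ, log (u : ZMod N) = c) :
    zetaElement p N s ∈ (augmentationIdeal p N s) ^ 2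
      ↔ ∑ i ∈ Finset.Icc 1 (N - 1), ((i : ZMod (p ^ s)) ^ 2) * log (i : ZMod N) = 0 := by
  haveI : NeZero N := ⟨(Fact.out (p := N.Prime)).ne_zero⟩
  have hN : 1 ≤ N := (Fact.out (p := N.Prime)).one_lt.le
  have hN1 : ((N : ℕ) : ZMod (p ^ s)) = 1 := N_cast_one p N s hdvd
  have hbeta : ∀ i : (ZMod N)ˣ, bernoulliCoeff p N s i
      = ((i : ZMod N).val : ZMod (p ^ s)) ^ 2 - ((i : ZMod N).val : ZMod (p ^ s))
        + (6 : ZMod (p ^ s))⁻¹ := by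
    intro i
    rw [bernoulliCoeff, hN1]
    norm_num
  have hsq : ∑ i : (ZMod N)ˣ, ((i : ZMod N).val : ZMod (p ^ s)) ^ 2 = 0 := by
    rw [sum_val_transfer N (fun k => ((k : ℕ) : ZMod (p ^ s)) ^ 2),
      sum_Icc_eq_range N _ (by norm_num) hN]
    exact sum_range_sq_cast_zero p N s hp hdvd
  have hlin : ∑ i : (ZMod N)ˣ, ((i : ZMod N).val : ZMod (p ^ s)) = 0 := by
    rw [sum_val_transfer N (fun k => ((k : ℕ) : ZMod (p ^ s))),
      sum_Icc_eq_range N _ (by norm_num) hN]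
    exact sum_range_cast_zero p N s hp hdvd
  have hconst : ∑ _i : (ZMod N)ˣ, (6 : ZMod (p ^ s))⁻¹ = 0 := by
    rw [Finset.sum_const, Finset.card_univ, ZMod.card_units, nsmul_eq_mul,
      Nsub1_cast p N s hdvd, zero_mul]
  have haug : augmentationMap p N s (zetaElement p N s) = 0 := by
    rw [zetaElement, map_sum]
    calc ∑ i : (ZMod N)ˣ, augmentationMap p N s (MonoidAlgebra.single i (bernoulliCoeff p N s i))
        = ∑ i : (ZMod N)ˣ, (((i : ZMod N).val : ZMod (p ^ s)) ^ 2
            - ((i : ZMod N).val : ZMod (p ^ s)) + (6 : ZMod (p ^ s))⁻¹) :=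
          Finset.sum_congr rfl (fun i _ => by rw [aug_single, hbeta])
    _ = 0 := by
          rw [Finset.sum_add_distrib, Finset.sum_sub_distrib, hsq, hlin, hconst]
          simp
  have hsnd : (psiHom p N s log hlog (zetaElement p N s)).snd
      = ∑ k ∈ Finset.Icc 1 (N - 1), ((k : ZMod (p ^ s)) ^ 2) * log ((k : ℕ) : ZMod N) := by
    rw [zetaElement, map_sum, TrivSqZeroExt.snd_sum]
    calc ∑ i : (ZMod N)ˣ,
          (psiHom p N s log hlog (MonoidAlgebra.single i (bernoulliCoeff p N s i))).snd
        = ∑ i : (ZMod N)ˣ, (((i : ZMod N).val : ZMod (p ^ s)) ^ 2 * log (i : ZMod N)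
            - ((i : ZMod N).val : ZMod (p ^ s)) * log (i : ZMod N)
            + (6 : ZMod (p ^ s))⁻¹ * log (i : ZMod N)) := by
          refine Finset.sum_congr rfl (fun i _ => ?_)
          rw [snd_psiHom_single, hbeta]
          ring
    _ = ∑ i : (ZMod N)ˣ, ((i : ZMod N).val : ZMod (p ^ s)) ^ 2 * log (i : ZMod N) := by
          rw [Finset.sum_add_distrib, Finset.sum_sub_distrib,
            sum_val_log_zero p N s log hlog hp hdvd, ← Finset.mul_sum,
            sum_log_zero p N s log hlog hp, mul_zero, sub_zero, add_zero]
    _ = ∑ i : (ZMod N)ˣ,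
          (fun k : ℕ => ((k : ZMod (p ^ s)) ^ 2) * log ((k : ℕ) : ZMod N)) ((i : ZMod N).val) := by
          refine Finset.sum_congr rfl (fun i _ => ?_)
          show _ = ((((i : ZMod N).val : ℕ) : ZMod (p ^ s)) ^ 2)
            * log ((((i : ZMod N).val : ℕ)) : ZMod N)
          have hc : (((i : ZMod N).val : ℕ) : ZMod N) = (i : ZMod N) := ZMod.natCast_rightInverse _
          rw [hc]
    _ = ∑ k ∈ Finset.Icc 1 (N - 1), ((k : ZMod (p ^ s)) ^ 2) * log ((k : ℕ) : ZMod N) := by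
          exact sum_val_transfer N (fun k => ((k : ZMod (p ^ s)) ^ 2) * log ((k : ℕ) : ZMod N))
  constructor
  · intro h
    have h0 := psiHom_eq_zero_of_mem_sq p N s log hlog _ h
    have : (psiHom p N s log hlog (zetaElement p N s)).snd = 0 := by rw [h0]; rfl
    rw [hsnd] at this
    exact this
  · intro h
    refine mem_sq_of_snd_eq_zero p N s log hlog hsurj _ haug ?_
    rw [hsnd]
    exact h
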